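/- arXiv:1608.08436 — 2 statements merged into one kernel-verified Lean document; each statement's English description precedes it below -/
import Mathlib

section
/- Let $n\in\mathbb{N}$ and $1\le p\le 2\le q\le r\le\infty$. For every real array $A=(A_{i,j,k})_{i,j,k=1}^n$, $\sup_{\|x\|_p=\|y\|_q=\|z\|_r=1}\big|\sum_{i,j,k=1}^n A_{i,j,k}x_iy_jz_k\big| \ge \tfrac{1}{\sqrt2}\, n^{-\frac1q-\frac1r-\frac32}\sum_{i,j,k=1}^n |A_{i,j,k}|$. -/
open Finset
open scoped ENNReal NNReal

/-- The `ℓ_p` norm on `ℝ^n` for an extended real exponent `p`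
(with `pnorm ∞ x = max_i |x i|`). -/
noncomputable def pnorm (p : ℝ≥0∞) {n : ℕ} (x : Fin n → ℝ) : ℝ :=
  if p = ∞ then ⨆ i, |x i| else (∑ i, |x i| ^ p.toReal) ^ (1 / p.toReal)

/-!
Take the slice `i₀` of `A` of largest ℓ¹ mass (at least `1/n` of the total) and test the form on
`x = e_{i₀}`, `y = n^{-1/q} δ`, `z = n^{-1/r} η` with sign vectors `δ`, `η`. Aligning `η` with the
signs of `∑ⱼ δⱼ A i₀ j k`, the value is `n^{-1/q-1/r} ∑ₖ |∑ⱼ δⱼ A i₀ j k|`, and an average over all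
`δ` makes this at least `(2n)^{-1/2}` times the mass of the slice by the L¹ Khintchine-type bound
`𝔼 |∑ εⱼ aⱼ| ≥ ‖a‖₁ / √(2N)`. By convexity and invariance under sign changes and permutations, the
constant vectors are the worst case, where the bound is `𝔼 |S_N| ≥ √(N/2)` for the simple random
walk; this follows from `𝔼 |S_{N+1}| = 𝔼 |S_N| + ℙ(S_N = 0)` and `binom(2m, m) ≥ 4^m / (2√m)`.
-/

/-- `2 ^ card ι` times the Rademacher average `𝔼 |∑ εᵢ aᵢ|`. -/
noncomputable def signSumAbs {ι : Type*} [Fintype ι] [DecidableEq ι] (a : ι → ℝ) : ℝ :=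
  ∑ ε : ι → ℤˣ, |∑ i, ((ε i : ℤ) : ℝ) * a i|

section SignSumAbs

variable {ι : Type*} [Fintype ι] [DecidableEq ι]

lemma signSumAbs_nonneg (a : ι → ℝ) : 0 ≤ signSumAbs a :=
  sum_nonneg fun _ _ => abs_nonneg _

lemma exists_unit_mul_eq_abs (x : ℝ) : ∃ u : ℤˣ, ((u : ℤ) : ℝ) * x = |x| := by
  rcases le_or_gt 0 x with hx | hx
  · exact ⟨1, by simp [abs_of_nonneg hx]⟩
  · exact ⟨-1, by simp [abs_of_neg hx]⟩

lemma signSumAbs_abs (a : ι → ℝ) : signSumAbs (fun i => |a i|) = signSumAbs a := by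
  choose s hs using fun i => exists_unit_mul_eq_abs (a i)
  refine Fintype.sum_equiv (Equiv.mulRight s) _ _ fun ε => ?_
  simp only [← hs, Equiv.coe_mulRight, Pi.mul_apply, Units.val_mul, Int.cast_mul, mul_assoc]

lemma signSumAbs_comp_equiv {κ : Type*} [Fintype κ] [DecidableEq κ] (a : κ → ℝ) (e : ι ≃ κ) :
    signSumAbs (a ∘ e) = signSumAbs a := by
  refine Fintype.sum_equiv (Equiv.arrowCongr e (Equiv.refl ℤˣ)) _ _ fun ε => ?_
  congr 1
  exact Fintype.sum_equiv e _ _ fun i => by simp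

lemma signSumAbs_sum_le {κ : Type*} (s : Finset κ) (v : κ → ι → ℝ) :
    signSumAbs (∑ c ∈ s, v c) ≤ ∑ c ∈ s, signSumAbs (v c) := by
  unfold signSumAbs
  rw [sum_comm]
  refine sum_le_sum fun ε _ => ?_
  simp only [Finset.sum_apply, mul_sum]
  rw [sum_comm]
  exact abs_sum_le_sum_abs _ _

lemma signSumAbs_const (t : ℝ) :
    signSumAbs (fun _ : ι => t) = |t| * signSumAbs (fun _ : ι => (1 : ℝ)) := by
  simp only [signSumAbs, ← sum_mul, abs_mul, mul_one, mul_comm |t|]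

/-- The translates of `|a|` average to the constant vector `‖a‖₁ / card ι`. -/
lemma sum_abs_mul_signSumAbs_one_le [AddGroup ι] (a : ι → ℝ) :
    (∑ i, |a i|) * signSumAbs (fun _ : ι => (1 : ℝ)) ≤ Fintype.card ι * signSumAbs a := by
  have hconst : (fun _ : ι => ∑ i, |a i|) = ∑ c : ι, fun i => |a (c + i)| := by
    funext i
    rw [Finset.sum_apply]
    exact (Fintype.sum_equiv (Equiv.addRight i) _ _ fun c => rfl).symm
  calc (∑ i, |a i|) * signSumAbs (fun _ : ι => (1 : ℝ))
      = signSumAbs (fun _ : ι => ∑ i, |a i|) := by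
        rw [signSumAbs_const (∑ i, |a i|), abs_of_nonneg (sum_nonneg fun i _ => abs_nonneg (a i))]
    _ ≤ ∑ c : ι, signSumAbs (fun i => |a (c + i)|) := hconst ▸ signSumAbs_sum_le _ _
    _ = Fintype.card ι * signSumAbs a := by
        have (c : ι) : signSumAbs (fun i => |a (c + i)|) = signSumAbs a :=
          (signSumAbs_comp_equiv (fun i => |a i|) (Equiv.addLeft c)).trans (signSumAbs_abs a)
        simp only [this, sum_const, card_univ, nsmul_eq_mul]

end SignSumAbs

/-! `signSumAbs (fun _ : Fin N => 1) = 2 ^ N 𝔼 |S_N|` for the simple random walk `S_N`; its lower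
bound is proved in squared form to keep square roots out of the induction. -/

lemma abs_add_one_add_abs_sub_one (X : ℤ) :
    |X + 1| + |X - 1| = 2 * |X| + 2 * if X = 0 then 1 else 0 := by
  split_ifs with h
  · simp [h]
  · rcases lt_or_gt_of_ne h with h | h
    · rw [abs_of_nonpos (by omega), abs_of_neg (by omega), abs_of_neg h]; ring
    · rw [abs_of_pos (by omega), abs_of_nonneg (by omega), abs_of_pos h]; ring

def balancedSignCount (N : ℕ) : ℕ := #{ε : Fin N → ℤˣ | ∑ j, (ε j : ℤ) = 0}

lemma signSumAbs_one_eq_sum_intCast_abs (N : ℕ) :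
    signSumAbs (fun _ : Fin N => (1 : ℝ)) = ∑ ε : Fin N → ℤˣ, ((|∑ j, (ε j : ℤ)| : ℤ) : ℝ) := by
  simp [signSumAbs]

lemma signSumAbs_one_succ (N : ℕ) :
    signSumAbs (fun _ : Fin (N + 1) => (1 : ℝ)) =
      2 * signSumAbs (fun _ : Fin N => (1 : ℝ)) + 2 * balancedSignCount N := by
  have hsplit : ∑ ε : Fin (N + 1) → ℤˣ, |∑ j, (ε j : ℤ)| =
      ∑ η : Fin N → ℤˣ, ∑ u : ℤˣ, |(∑ j, (η j : ℤ)) + u| := by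
    rw [← Fintype.sum_prod_type_right']
    refine Fintype.sum_equiv (Fin.consEquiv fun _ => ℤˣ).symm _ _ fun ε => ?_
    simp [Fin.sum_univ_succ, Fin.consEquiv, Fin.tail, add_comm]
  have hpair (η : Fin N → ℤˣ) : ∑ u : ℤˣ, |(∑ j, (η j : ℤ)) + u| =
      2 * |∑ j, (η j : ℤ)| + 2 * if ∑ j, (η j : ℤ) = 0 then 1 else 0 := by
    rw [UnitsInt.univ, sum_pair (by decide)]
    simpa [← sub_eq_add_neg] using abs_add_one_add_abs_sub_one _
  rw [signSumAbs_one_eq_sum_intCast_abs, signSumAbs_one_eq_sum_intCast_abs, ← Int.cast_sum, hsplit]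
  simp only [hpair, sum_add_distrib, ← mul_sum, balancedSignCount, card_filter]
  push_cast
  rfl

lemma centralBinom_le_balancedSignCount (m : ℕ) : m.centralBinom ≤ balancedSignCount (2 * m) := by
  have hcard : #(powersetCard m (univ : Finset (Fin (2 * m)))) = m.centralBinom := by
    rw [card_powersetCard, card_univ, Fintype.card_fin, Nat.centralBinom_eq_two_mul_choose]
  rw [← hcard]
  refine card_le_card_of_injOn (fun s j => if j ∈ s then 1 else -1) (fun s hs => ?_) ?_
  · rw [mem_coe, mem_powersetCard] at hs
    have (j : Fin (2 * m)) :
        ((if j ∈ s then 1 else -1 : ℤˣ) : ℤ) = 2 * (if j ∈ s then 1 else 0) - 1 := by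
      split_ifs <;> rfl
    simp [this, sum_sub_distrib, hs.2]
    ring
  · intro s _ t _ hst
    ext j
    have := congrFun hst j
    by_cases hs : j ∈ s <;> by_cases ht : j ∈ t <;> simp_all

lemma sixteen_pow_le_four_mul_centralBinom_sq {m : ℕ} (hm : 0 < m) :
    16 ^ m ≤ 4 * m * m.centralBinom ^ 2 := by
  induction m, hm using Nat.le_induction with
  | base => decide
  | succ m hm ih =>
    have hrec := Nat.succ_mul_centralBinom_succ m
    suffices (m + 1) * 16 ^ (m + 1) ≤ (m + 1) * (4 * (m + 1) * (m + 1).centralBinom ^ 2) from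
      Nat.le_of_mul_le_mul_left this m.succ_pos
    calc (m + 1) * 16 ^ (m + 1) ≤ 16 * (m + 1) * (4 * m * m.centralBinom ^ 2) := by
          rw [pow_succ]; nlinarith
      _ ≤ 16 * (2 * m + 1) ^ 2 * m.centralBinom ^ 2 := by
          nlinarith
      _ = (m + 1) * (4 * (m + 1) * (m + 1).centralBinom ^ 2) := by
          rw [show (m + 1) * (4 * (m + 1) * (m + 1).centralBinom ^ 2) =
            4 * ((m + 1) * (m + 1).centralBinom) ^ 2 by ring, hrec]
          ring

lemma sixteen_pow_mul_succ_le_sq_signSumAbs_add_balancedSignCount (m : ℕ)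
    (h : 16 ^ m * m ≤ signSumAbs (fun _ : Fin (2 * m) => (1 : ℝ)) ^ 2) :
    16 ^ m * (m + 1) ≤
      (signSumAbs (fun _ : Fin (2 * m) => (1 : ℝ)) + balancedSignCount (2 * m)) ^ 2 := by
  set T := signSumAbs (fun _ : Fin (2 * m) => (1 : ℝ))
  set Z : ℝ := (balancedSignCount (2 * m) : ℝ) with hZdef
  rcases m.eq_zero_or_pos with rfl | hm
  · have hT : T = 0 := by simp [T, signSumAbs]
    have hZ : Z = 1 := by simp [Z, balancedSignCount]
    simp [hT, hZ]
  have hT0 : 0 ≤ T := signSumAbs_nonneg _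
  have hZ : (16 : ℝ) ^ m ≤ 4 * m * Z ^ 2 := by
    have h1 : (16 : ℝ) ^ m ≤ 4 * m * m.centralBinom ^ 2 := by
      exact_mod_cast sixteen_pow_le_four_mul_centralBinom_sq hm
    have h2 : (m.centralBinom : ℝ) ≤ Z := by
      rw [hZdef]; exact_mod_cast centralBinom_le_balancedSignCount m
    calc (16 : ℝ) ^ m ≤ 4 * m * m.centralBinom ^ 2 := h1
      _ ≤ 4 * m * Z ^ 2 := by gcongr
  have hcross : (16 : ℝ) ^ m ≤ 2 * T * Z := by
    refine (pow_le_pow_iff_left₀ (by positivity) (by positivity) two_ne_zero).1 ?_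
    calc ((16 : ℝ) ^ m) ^ 2 ≤ 16 ^ m * (4 * m * Z ^ 2) := by rw [sq]; gcongr
      _ ≤ 4 * T ^ 2 * Z ^ 2 := by nlinarith
      _ = (2 * T * Z) ^ 2 := by ring
  nlinarith

lemma sixteen_pow_mul_le_sq_signSumAbs_one (m : ℕ) :
    16 ^ m * m ≤ signSumAbs (fun _ : Fin (2 * m) => (1 : ℝ)) ^ 2 := by
  induction m with
  | zero => simp [sq_nonneg]
  | succ m ih =>
    have hstep : 4 * (signSumAbs (fun _ : Fin (2 * m) => (1 : ℝ)) + balancedSignCount (2 * m)) ≤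
        signSumAbs (fun _ : Fin (2 * (m + 1)) => (1 : ℝ)) := by
      rw [show 2 * (m + 1) = 2 * m + 1 + 1 by ring, signSumAbs_one_succ, signSumAbs_one_succ]
      have : (0 : ℝ) ≤ balancedSignCount (2 * m + 1) := by positivity
      linarith
    have h0 : 0 ≤ signSumAbs (fun _ : Fin (2 * m) => (1 : ℝ)) + balancedSignCount (2 * m) := by
      have := signSumAbs_nonneg (fun _ : Fin (2 * m) => (1 : ℝ))
      positivity
    calc (16 : ℝ) ^ (m + 1) * ↑(m + 1) = 16 * (16 ^ m * (m + 1)) := by push_cast; ring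
      _ ≤ 16 * (signSumAbs (fun _ : Fin (2 * m) => (1 : ℝ)) + balancedSignCount (2 * m)) ^ 2 := by
          gcongr; exact sixteen_pow_mul_succ_le_sq_signSumAbs_add_balancedSignCount m ih
      _ ≤ _ := by nlinarith

lemma four_pow_mul_le_two_mul_sq_signSumAbs_one (N : ℕ) :
    4 ^ N * N ≤ 2 * signSumAbs (fun _ : Fin N => (1 : ℝ)) ^ 2 := by
  obtain ⟨m, rfl | rfl⟩ := N.even_or_odd'
  · have := sixteen_pow_mul_le_sq_signSumAbs_one m
    rw [pow_mul]; push_cast; norm_num; linarith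
  · have := sixteen_pow_mul_succ_le_sq_signSumAbs_add_balancedSignCount m (sixteen_pow_mul_le_sq_signSumAbs_one m)
    rw [signSumAbs_one_succ, pow_succ, pow_mul]
    push_cast; norm_num; nlinarith

lemma two_pow_mul_le_sqrt_mul_signSumAbs_one (N : ℕ) :
    2 ^ N * N ≤ √(2 * N) * signSumAbs (fun _ : Fin N => (1 : ℝ)) := by
  refine (pow_le_pow_iff_left₀ (by positivity)
    (mul_nonneg (Real.sqrt_nonneg _) (signSumAbs_nonneg _)) two_ne_zero).1 ?_
  calc ((2 : ℝ) ^ N * N) ^ 2 = 4 ^ N * N * N := by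
        rw [mul_pow, ← pow_mul, mul_comm N 2, pow_mul]; norm_num; ring
    _ ≤ 2 * signSumAbs (fun _ : Fin N => (1 : ℝ)) ^ 2 * N := by
        gcongr ?_ * _; exact four_pow_mul_le_two_mul_sq_signSumAbs_one N
    _ = (√(2 * N) * signSumAbs (fun _ : Fin N => (1 : ℝ))) ^ 2 := by
        rw [mul_pow, Real.sq_sqrt (by positivity)]; ring

theorem two_pow_mul_sum_abs_le_sqrt_mul_signSumAbs {N : ℕ} (a : Fin N → ℝ) :
    2 ^ N * ∑ i, |a i| ≤ √(2 * N) * signSumAbs a := by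
  rcases N.eq_zero_or_pos with rfl | hN
  · simp
  have : NeZero N := ⟨hN.ne'⟩
  have hsym := sum_abs_mul_signSumAbs_one_le a
  rw [Fintype.card_fin] at hsym
  have hwalk := two_pow_mul_le_sqrt_mul_signSumAbs_one N
  have hL : 0 ≤ ∑ i, |a i| := sum_nonneg fun i _ => abs_nonneg (a i)
  refine le_of_mul_le_mul_right ?_ (Nat.cast_pos.2 hN)
  calc 2 ^ N * (∑ i, |a i|) * N = (2 ^ N * N) * ∑ i, |a i| := by ring
    _ ≤ √(2 * N) * signSumAbs (fun _ : Fin N => (1 : ℝ)) * ∑ i, |a i| := by gcongr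
    _ = √(2 * N) * ((∑ i, |a i|) * signSumAbs (fun _ : Fin N => (1 : ℝ))) := by ring
    _ ≤ √(2 * N) * (N * signSumAbs a) := by gcongr
    _ = √(2 * N) * signSumAbs a * N := by ring

theorem exists_signs_sum_abs_le {N : ℕ} {κ : Type*} [Fintype κ] (B : Fin N → κ → ℝ) :
    ∃ δ : Fin N → ℤˣ, ∑ k, ∑ j, |B j k| ≤ √(2 * N) * ∑ k, |∑ j, ((δ j : ℤ) : ℝ) * B j k| := by
  have havg : ∑ _δ : Fin N → ℤˣ, ∑ k, ∑ j, |B j k| ≤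
      ∑ δ : Fin N → ℤˣ, √(2 * N) * ∑ k, |∑ j, ((δ j : ℤ) : ℝ) * B j k| := by
    calc ∑ _δ : Fin N → ℤˣ, ∑ k, ∑ j, |B j k| = ∑ k, 2 ^ N * ∑ j, |B j k| := by
          simp [mul_sum]
      _ ≤ ∑ k, √(2 * N) * signSumAbs (B · k) :=
          sum_le_sum fun k _ => two_pow_mul_sum_abs_le_sqrt_mul_signSumAbs (B · k)
      _ = _ := by simp only [signSumAbs, ← mul_sum]; rw [sum_comm]
  obtain ⟨δ, -, hδ⟩ := exists_le_of_sum_le univ_nonempty havg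
  exact ⟨δ, hδ⟩

section Pnorm

variable {n : ℕ} {p : ℝ≥0∞}

lemma abs_le_pnorm (hp : p ≠ 0) (x : Fin n → ℝ) (i : Fin n) : |x i| ≤ pnorm p x := by
  unfold pnorm
  split_ifs with htop
  · exact le_ciSup (f := fun i => |x i|) (Set.finite_range _).bddAbove i
  · have ht : 0 < p.toReal := ENNReal.toReal_pos hp htop
    calc |x i| = (|x i| ^ p.toReal) ^ (1 / p.toReal) := by
          rw [one_div, Real.rpow_rpow_inv (abs_nonneg _) ht.ne']
      _ ≤ (∑ i, |x i| ^ p.toReal) ^ (1 / p.toReal) := by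
          gcongr
          exact single_le_sum (f := fun j => |x j| ^ p.toReal)
            (fun j _ => Real.rpow_nonneg (abs_nonneg _) _) (mem_univ i)

lemma pnorm_of_abs_eq [NeZero n] (hp : p ≠ 0) {x : Fin n → ℝ} {c : ℝ} (hc : 0 ≤ c)
    (hx : ∀ i, |x i| = c) : pnorm p x = (n : ℝ) ^ (1 / p).toReal * c := by
  unfold pnorm
  split_ifs with htop
  · simp [htop, hx]
  · have ht : 0 < p.toReal := ENNReal.toReal_pos hp htop
    simp only [hx, sum_const, card_univ, Fintype.card_fin, nsmul_eq_mul]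
    rw [Real.mul_rpow (by positivity) (by positivity), one_div, Real.rpow_rpow_inv hc ht.ne',
      one_div, ENNReal.toReal_inv]

lemma pnorm_rpow_neg_mul_units [NeZero n] (hp : p ≠ 0) (ε : Fin n → ℤˣ) :
    pnorm p (fun i => (n : ℝ) ^ (-(1 / p).toReal) * ((ε i : ℤ) : ℝ)) = 1 := by
  have hn : (0 : ℝ) < n := Nat.cast_pos.2 (Nat.pos_of_neZero n)
  have hc := Real.rpow_pos_of_pos hn (-(1 / p).toReal)
  rw [pnorm_of_abs_eq hp hc.le fun i => by
    rw [abs_mul, abs_of_pos hc, abs_unit_intCast, mul_one], Real.rpow_neg hn.le,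
    mul_inv_cancel₀ (Real.rpow_pos_of_pos hn _).ne']

lemma pnorm_single (hp : p ≠ 0) (i : Fin n) : pnorm p (Pi.single i 1) = 1 := by
  unfold pnorm
  split_ifs with htop
  · have := Nonempty.intro i
    refine le_antisymm (ciSup_le fun j => ?_) ?_
    · rw [Pi.single_apply]; split_ifs <;> simp
    · simpa using le_ciSup (f := fun j => |(Pi.single i 1 : Fin n → ℝ) j|)
        (Set.finite_range _).bddAbove i
  · have ht : 0 < p.toReal := ENNReal.toReal_pos hp htop
    simp [Pi.single_apply, apply_ite, Real.zero_rpow ht.ne']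

end Pnorm

section Trilinear

variable {ι κ μ : Type*} [Fintype ι] [Fintype κ] [Fintype μ]

lemma abs_sum_mul_le_sum_abs (A : ι → κ → μ → ℝ) {x : ι → ℝ} {y : κ → ℝ} {z : μ → ℝ}
    (hx : ∀ i, |x i| ≤ 1) (hy : ∀ j, |y j| ≤ 1) (hz : ∀ k, |z k| ≤ 1) :
    |∑ i, ∑ j, ∑ k, A i j k * x i * y j * z k| ≤ ∑ i, ∑ j, ∑ k, |A i j k| := by
  refine (abs_sum_le_sum_abs _ _).trans <| sum_le_sum fun i _ => (abs_sum_le_sum_abs _ _).trans <|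
    sum_le_sum fun j _ => (abs_sum_le_sum_abs _ _).trans <| sum_le_sum fun k _ => ?_
  simp only [abs_mul]
  have := abs_nonneg (A i j k)
  calc |A i j k| * |x i| * |y j| * |z k| ≤ |A i j k| * 1 * 1 * 1 := by
        gcongr <;> first | exact hx i | exact hy j | exact hz k
    _ = |A i j k| := by ring

lemma sum_mul_single_left [DecidableEq ι] (A : ι → κ → μ → ℝ) (i₀ : ι) (y : κ → ℝ) (z : μ → ℝ) :
    ∑ i, ∑ j, ∑ k, A i j k * (Pi.single i₀ 1 : ι → ℝ) i * y j * z k =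
      ∑ k, z k * ∑ j, y j * A i₀ j k := by
  rw [Fintype.sum_eq_single i₀ fun i hi => by simp [Pi.single_eq_of_ne hi], sum_comm]
  simp only [Pi.single_eq_same, mul_one, mul_sum]
  exact sum_congr rfl fun k _ => sum_congr rfl fun j _ => by ring

end Trilinear

lemma inv_sqrt_two_mul_rpow_eq {n : ℝ} (hn : 0 < n) (a b : ℝ) :
    1 / √2 * n ^ (-a - b - 3 / 2) = n ^ (-a) * n ^ (-b) / (n * √(2 * n)) := by
  have h32 : n ^ (3 / 2 : ℝ) = n * √n := by
    rw [show (3 / 2 : ℝ) = 1 + 1 / 2 by norm_num, Real.rpow_add hn, Real.rpow_one,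
      ← Real.sqrt_eq_rpow]
  rw [sub_eq_add_neg (-a - b), Real.rpow_add hn, sub_eq_add_neg, Real.rpow_add hn,
    Real.rpow_neg hn.le (3 / 2), h32, Real.sqrt_mul zero_le_two]
  have : 0 < √n := Real.sqrt_pos.2 hn
  field_simp

lemma bddAbove_abs_trilinear {n : ℕ} {p q r : ℝ≥0∞} (hp : p ≠ 0) (hq : q ≠ 0) (hr : r ≠ 0)
    (A : Fin n → Fin n → Fin n → ℝ) :
    BddAbove {t : ℝ | ∃ x y z : Fin n → ℝ, pnorm p x = 1 ∧ pnorm q y = 1 ∧ pnorm r z = 1 ∧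
        t = |∑ i, ∑ j, ∑ k, A i j k * x i * y j * z k|} := by
  refine ⟨∑ i, ∑ j, ∑ k, |A i j k|, ?_⟩
  rintro _ ⟨x, y, z, hx, hy, hz, rfl⟩
  exact abs_sum_mul_le_sum_abs A (fun i => hx ▸ abs_le_pnorm hp x i)
    (fun j => hy ▸ abs_le_pnorm hq y j) (fun k => hz ▸ abs_le_pnorm hr z k)

lemma exists_pnorm_eq_one_sum_abs_le {n : ℕ} [NeZero n] {p q r : ℝ≥0∞} (hp : p ≠ 0)
    (hq : q ≠ 0) (hr : r ≠ 0) (A : Fin n → Fin n → Fin n → ℝ) :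
    ∃ x y z : Fin n → ℝ, pnorm p x = 1 ∧ pnorm q y = 1 ∧ pnorm r z = 1 ∧
      (n : ℝ) ^ (-(1 / q).toReal) * (n : ℝ) ^ (-(1 / r).toReal) * ∑ i, ∑ j, ∑ k, |A i j k| ≤
        n * √(2 * n) * |∑ i, ∑ j, ∑ k, A i j k * x i * y j * z k| := by
  have hn : (0 : ℝ) < n := Nat.cast_pos.2 (Nat.pos_of_neZero n)
  obtain ⟨i₀, -, hi₀⟩ : ∃ i₀ ∈ univ, (∑ i, ∑ j, ∑ k, |A i j k|) / n ≤ ∑ k, ∑ j, |A i₀ j k| := by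
    refine exists_le_of_sum_le univ_nonempty (le_of_eq ?_)
    rw [sum_const, card_univ, Fintype.card_fin, nsmul_eq_mul, mul_div_cancel₀ _ hn.ne']
    exact sum_congr rfl fun i _ => sum_comm
  obtain ⟨δ, hδ⟩ := exists_signs_sum_abs_le (fun j k => A i₀ j k)
  set S : Fin n → ℝ := fun k => ∑ j, ((δ j : ℤ) : ℝ) * A i₀ j k
  choose η hη using fun k => exists_unit_mul_eq_abs (S k)
  refine ⟨Pi.single i₀ 1, _, _, pnorm_single hp i₀, pnorm_rpow_neg_mul_units hq δ,
    pnorm_rpow_neg_mul_units hr η, ?_⟩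
  have hval : ∑ k, (n : ℝ) ^ (-(1 / r).toReal) * ((η k : ℤ) : ℝ) *
      ∑ j, (n : ℝ) ^ (-(1 / q).toReal) * ((δ j : ℤ) : ℝ) * A i₀ j k =
      (n : ℝ) ^ (-(1 / q).toReal) * (n : ℝ) ^ (-(1 / r).toReal) * ∑ k, |S k| := by
    simp only [S, ← hη, mul_sum]
    exact sum_congr rfl fun k _ => sum_congr rfl fun j _ => by ring
  have hslice : ∑ i, ∑ j, ∑ k, |A i j k| ≤ n * √(2 * n) * ∑ k, |S k| := by
    rw [div_le_iff₀' hn] at hi₀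
    exact hi₀.trans (by rw [mul_assoc]; gcongr)
  rw [sum_mul_single_left, hval, abs_of_nonneg (by positivity)]
  calc _ ≤ (n : ℝ) ^ (-(1 / q).toReal) * (n : ℝ) ^ (-(1 / r).toReal) *
        (n * √(2 * n) * ∑ k, |S k|) := by gcongr
    _ = _ := by ring

theorem stmt1_general (n : ℕ) (p q r : ℝ≥0∞) (hp : 1 ≤ p) (h2q : 2 ≤ q) (hqr : q ≤ r)
    (A : Fin n → Fin n → Fin n → ℝ) :
    sSup {t : ℝ | ∃ x y z : Fin n → ℝ, pnorm p x = 1 ∧ pnorm q y = 1 ∧ pnorm r z = 1 ∧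
        t = |∑ i, ∑ j, ∑ k, A i j k * x i * y j * z k|} ≥
      (1 / Real.sqrt 2) * (n : ℝ) ^ (-(1 / q).toReal - (1 / r).toReal - 3 / 2) *
        ∑ i, ∑ j, ∑ k, |A i j k| := by
  have hp0 : p ≠ 0 := (zero_lt_one.trans_le hp).ne'
  have hq0 : q ≠ 0 := ((zero_lt_two (α := ℝ≥0∞)).trans_le h2q).ne'
  have hr0 : r ≠ 0 := ((zero_lt_two (α := ℝ≥0∞)).trans_le (h2q.trans hqr)).ne'
  rcases n.eq_zero_or_pos with rfl | hn
  · simp only [univ_eq_empty, sum_empty, mul_zero, ge_iff_le]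
    exact Real.sSup_nonneg fun t ⟨_, _, _, _, _, _, ht⟩ => ht ▸ abs_nonneg _
  have : NeZero n := NeZero.of_pos hn
  obtain ⟨x, y, z, hx, hy, hz, hxyz⟩ := exists_pnorm_eq_one_sum_abs_le hp0 hq0 hr0 A
  refine le_csSup_of_le (bddAbove_abs_trilinear hp0 hq0 hr0 A) ⟨x, y, z, hx, hy, hz, rfl⟩ ?_
  rw [inv_sqrt_two_mul_rpow_eq (Nat.cast_pos.2 hn), div_mul_eq_mul_div,
    div_le_iff₀' (by positivity)]
  exact hxyz

theorem stmt1 (n : ℕ) (p q r : ℝ≥0∞) (hp : 1 ≤ p) (hp2 : p ≤ 2) (h2q : 2 ≤ q) (hqr : q ≤ r)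
    (A : Fin n → Fin n → Fin n → ℝ) :
    sSup {t : ℝ | ∃ x y z : Fin n → ℝ, pnorm p x = 1 ∧ pnorm q y = 1 ∧ pnorm r z = 1 ∧
        t = |∑ i, ∑ j, ∑ k, A i j k * x i * y j * z k|} ≥
      (1 / Real.sqrt 2) * (n : ℝ) ^ (-(1 / q).toReal - (1 / r).toReal - 3 / 2) *
        ∑ i, ∑ j, ∑ k, |A i j k| :=
  stmt1_general n p q r hp h2q hqr A
end

section
/- Let $(X,\|\cdot\|_X)$ be an $n$-dimensional real Banach space and let $e_1,\dots,e_n$ be a basis with $\|e_i\|_X=1$ for all $i$. Let $(\varepsilon_i)_{i=1}^n$ be independent symmetric $\pm1$ Bernoulli random variables. Then $2^n\big(\mathbb{E}\|\sum_{i=1}^n\varepsilon_i e_i\|_X\big)^{-n}\le \mathrm{vol}_n(B_X)$, where $B_X$ is the unit ball of $X$ and volume is computed with respect to the Lebesgue measure induced by the basis $e_1,\dots,e_n$. -/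
open Finset MeasureTheory Module
open scoped Pointwise Nat

/-!
Let `S x = 𝔼_ε N (ε x)` be the Rademacher average of the norm and `M = S 1 = 𝔼 ‖∑ εᵢ eᵢ‖`.
`S` is again a norm and is invariant under coordinate sign changes, so as a convex function on
the cube `‖x‖_∞ ≤ r` it attains its maximum `r M` at a vertex. Hence the cube of half-side `M⁻¹`,
of volume `2ⁿ M⁻ⁿ`, lies in `{S < 1}`.

For a positively homogeneous `g ≥ 0`, writing `e^{-g x} = ∫_{t > g x} e^{-t} dt` and using Fubini
gives `∫ e^{-g} = n! · vol {g < 1}`. Jensen's inequality for `exp`, together with the invariance of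
Lebesgue measure under sign changes, gives `∫ e^{-S} ≤ ∫ e^{-N}`, hence `vol {S < 1} ≤ vol {N < 1}`.
-/

lemma lintegral_Ioi_exp_neg (a : ℝ) :
    ∫⁻ t in Set.Ioi a, ENNReal.ofReal (Real.exp (-t)) = ENNReal.ofReal (Real.exp (-a)) := by
  rw [← ofReal_integral_eq_lintegral_ofReal (integrableOn_exp_neg_Ioi a)
    (.of_forall fun _ => (Real.exp_pos _).le), integral_exp_neg_Ioi]

lemma lintegral_Ioi_exp_neg_mul_pow (n : ℕ) :
    ∫⁻ t in Set.Ioi 0, ENNReal.ofReal (Real.exp (-t) * t ^ n) = n ! := by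
  have hint : IntegrableOn (fun t : ℝ => Real.exp (-t) * t ^ n) (Set.Ioi 0) := by
    simpa using Real.GammaIntegral_convergent (s := n + 1) (by positivity)
  rw [← ofReal_integral_eq_lintegral_ofReal hint
    (ae_restrict_of_forall_mem measurableSet_Ioi fun t (ht : 0 < t) => by positivity)]
  have := Real.Gamma_eq_integral (s := n + 1) (by positivity)
  simp only [add_sub_cancel_right, Real.rpow_natCast, Real.Gamma_nat_eq_factorial] at this
  rw [← this, ENNReal.ofReal_natCast]

section Homogeneous

variable {E : Type*} [NormedAddCommGroup E] [NormedSpace ℝ E] [FiniteDimensional ℝ E]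
  [MeasurableSpace E] [BorelSpace E] (μ : Measure E) [μ.IsAddHaarMeasure]
  {g : E → ℝ} (hg_smul : ∀ (c : ℝ) x, 0 < c → g (c • x) = c * g x)
include hg_smul

lemma measure_setOf_lt_of_homogeneous {t : ℝ} (ht : 0 < t) :
    μ {x | g x < t} = ENNReal.ofReal (t ^ finrank ℝ E) * μ {x | g x < 1} := by
  have : {x | g x < t} = t • {x | g x < 1} := by
    ext y
    rw [Set.mem_smul_set_iff_inv_smul_mem₀ ht.ne', Set.mem_ofPred_eq, Set.mem_ofPred_eq,
      hg_smul _ _ (inv_pos.2 ht), inv_mul_lt_iff₀ ht, mul_one]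
  rw [this, Measure.addHaar_smul_of_nonneg μ ht.le]

variable (hg : Measurable g) (hg0 : ∀ x, 0 ≤ g x)
include hg hg0

lemma lintegral_exp_neg_eq_factorial_mul_measure :
    ∫⁻ x, ENNReal.ofReal (Real.exp (-g x)) ∂μ = (finrank ℝ E)! * μ {x | g x < 1} := by
  set F : ℝ → ENNReal := fun t => ENNReal.ofReal (Real.exp (-t))
  have hF : Measurable fun p : E × ℝ => (Set.Ioi (g p.1)).indicator F p.2 :=
    Measurable.ite (measurableSet_lt (hg.comp measurable_fst) measurable_snd) (by fun_prop)
      measurable_const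
  have hslice (t : ℝ) : ∫⁻ x, (Set.Ioi (g x)).indicator F t ∂μ =
      (Set.Ioi 0).indicator (fun t => ENNReal.ofReal (Real.exp (-t) * t ^ finrank ℝ E)) t *
        μ {x | g x < 1} := by
    have (x : E) : (Set.Ioi (g x)).indicator F t = {x | g x < t}.indicator (fun _ => F t) x := by
      simp only [Set.indicator, Set.mem_Ioi, Set.mem_ofPred_eq]
    simp_rw [this]
    rw [lintegral_indicator_const (measurableSet_lt hg measurable_const)]
    rcases le_or_gt t 0 with ht | ht
    · have : {x | g x < t} = ∅ :=
        Set.eq_empty_of_forall_notMem fun x hx => (hg0 x).not_gt (hx.trans_le ht)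
      simp [this, ht]
    · rw [Set.indicator_of_mem (Set.mem_Ioi.2 ht), measure_setOf_lt_of_homogeneous μ hg_smul ht,
        ENNReal.ofReal_mul (Real.exp_pos _).le, mul_assoc]
  calc ∫⁻ x, ENNReal.ofReal (Real.exp (-g x)) ∂μ
      = ∫⁻ x, (∫⁻ t, (Set.Ioi (g x)).indicator F t) ∂μ := by
        simp_rw [lintegral_indicator measurableSet_Ioi, F, lintegral_Ioi_exp_neg]
    _ = ∫⁻ t, ∫⁻ x, (Set.Ioi (g x)).indicator F t ∂μ := lintegral_lintegral_swap hF.aemeasurable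
    _ = (finrank ℝ E)! * μ {x | g x < 1} := by
        simp_rw [hslice]
        rw [lintegral_mul_const _ ((by fun_prop : Measurable _).indicator measurableSet_Ioi),
          lintegral_indicator measurableSet_Ioi, lintegral_Ioi_exp_neg_mul_pow]

end Homogeneous

lemma Seminorm.continuous_of_finiteDimensional {E : Type*} [NormedAddCommGroup E]
    [NormedSpace ℝ E] [FiniteDimensional ℝ E] (p : Seminorm ℝ E) : Continuous p :=
  p.convexOn.locallyLipschitz.continuous

lemma Seminorm.measure_lt_one_le_of_lintegral_exp_neg_le {E : Type*} [NormedAddCommGroup E]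
    [NormedSpace ℝ E] [FiniteDimensional ℝ E] [MeasurableSpace E] [BorelSpace E]
    (μ : Measure E) [μ.IsAddHaarMeasure] (p q : Seminorm ℝ E)
    (hpq : ∫⁻ x, ENNReal.ofReal (Real.exp (-p x)) ∂μ ≤ ∫⁻ x, ENNReal.ofReal (Real.exp (-q x)) ∂μ) :
    μ {x | p x < 1} ≤ μ {x | q x < 1} := by
  have hsmul (r : Seminorm ℝ E) (c : ℝ) (x : E) (hc : 0 < c) : r (c • x) = c * r x := by
    rw [map_smul_eq_mul, Real.norm_of_nonneg hc.le]
  rw [lintegral_exp_neg_eq_factorial_mul_measure μ (hsmul p)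
      p.continuous_of_finiteDimensional.measurable (apply_nonneg p),
    lintegral_exp_neg_eq_factorial_mul_measure μ (hsmul q)
      q.continuous_of_finiteDimensional.measurable (apply_nonneg q)] at hpq
  exact (ENNReal.mul_le_mul_iff_right (by positivity) (ENNReal.natCast_ne_top _)).1 hpq

section SignAverage

variable {ι : Type*}

def signVec (ε : ι → Bool) : ι → ℝ := fun i => if ε i then 1 else -1

lemma abs_signVec (ε : ι → Bool) (i : ι) : |signVec ε i| = 1 := by
  unfold signVec; split_ifs <;> norm_num

lemma signVec_mul_signVec (ε δ : ι → Bool) :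
    signVec ε * signVec δ = signVec fun i => ε i == δ i := by
  ext i; cases hε : ε i <;> cases hδ : δ i <;> simp [signVec, hε, hδ]

variable [Fintype ι]

lemma measurePreserving_signVec_mul (ε : ι → Bool) :
    MeasurePreserving (signVec ε * ·) volume volume := by
  refine volume_preserving_pi (f := fun i a => signVec ε i * a) fun i => ?_
  cases hε : ε i
  · convert Measure.measurePreserving_neg (volume : Measure ℝ) using 1
    ext a; simp [signVec, hε]
  · convert MeasurePreserving.id (volume : Measure ℝ) using 1
    ext a; simp [signVec, hε]

variable [DecidableEq ι]

noncomputable def Seminorm.signAverage (p : Seminorm ℝ (ι → ℝ)) : Seminorm ℝ (ι → ℝ) :=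
  Seminorm.of (fun x => ((2 : ℝ) ^ Fintype.card ι)⁻¹ * ∑ ε : ι → Bool, p (signVec ε * x))
    (fun x y => by
      rw [← mul_add, ← sum_add_distrib]
      gcongr with ε
      rw [mul_add]
      exact map_add_le_add p _ _)
    (fun c x => by
      simp_rw [mul_smul_comm, map_smul_eq_mul, ← mul_sum]
      ring)

namespace Seminorm

variable (p : Seminorm ℝ (ι → ℝ))

lemma signAverage_apply (x : ι → ℝ) :
    p.signAverage x = ((2 : ℝ) ^ Fintype.card ι)⁻¹ * ∑ ε : ι → Bool, p (signVec ε * x) := rfl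

lemma signAverage_signVec_mul (δ : ι → Bool) (x : ι → ℝ) :
    p.signAverage (signVec δ * x) = p.signAverage x := by
  have hinv : Function.Involutive (fun (ε : ι → Bool) (i : ι) => ε i == δ i) := by
    intro ε; funext i; simp
  rw [signAverage_apply, signAverage_apply,
    Fintype.sum_bijective _ hinv.bijective _ (fun ε => p (signVec ε * x))]
  intro ε
  rw [← mul_assoc, signVec_mul_signVec]

lemma signAverage_single (i : ι) (c : ℝ) : p.signAverage (Pi.single i c) = p (Pi.single i c) := by
  have (ε : ι → Bool) : signVec ε * Pi.single i c = signVec ε i • Pi.single i c := by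
    ext j; by_cases h : j = i <;> simp [h]
  simp_rw [signAverage_apply, this, map_smul_eq_mul, Real.norm_eq_abs, abs_signVec, one_mul,
    sum_const, card_univ, Fintype.card_fun, Fintype.card_bool, nsmul_eq_mul]
  push_cast
  rw [← mul_assoc, inv_mul_cancel₀ (by positivity), one_mul]

lemma signAverage_le_mul_norm (x : ι → ℝ) : p.signAverage x ≤ p.signAverage 1 * ‖x‖ := by
  set r := ‖x‖
  have hx : x ∈ convexHull ℝ (Set.univ.pi fun _ => {-r, r}) := by
    rw [convexHull_pi]
    intro i _
    rw [convexHull_pair, segment_eq_Icc (neg_le_self (norm_nonneg x))]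
    exact abs_le.1 (by simpa using norm_le_pi_norm x i)
  obtain ⟨y, hy, hxy⟩ := p.signAverage.convexOn.exists_ge_of_mem_convexHull (Set.subset_univ _) hx
  have hy : y = signVec (fun i => decide (y i = r)) * r • 1 := by
    ext i
    rcases hy i (Set.mem_univ i) with h | (h : y i = r) <;> simp [signVec, h]
  calc p.signAverage x ≤ p.signAverage y := hxy
    _ = p.signAverage 1 * r := by
      rw [hy, signAverage_signVec_mul, map_smul_eq_mul, Real.norm_eq_abs, abs_norm, mul_comm]

lemma one_le_signAverage_one [Nonempty ι] (hp : ∀ i, p (Pi.single i 1) = 1) :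
    1 ≤ p.signAverage 1 := by
  obtain ⟨i⟩ := ‹Nonempty ι›
  simpa [signAverage_single, hp, Pi.norm_single] using p.signAverage_le_mul_norm (Pi.single i 1)

lemma lintegral_exp_neg_signAverage_le :
    ∫⁻ x, ENNReal.ofReal (Real.exp (-p.signAverage x)) ≤
      ∫⁻ x, ENNReal.ofReal (Real.exp (-p x)) := by
  set w : ℝ := ((2 : ℝ) ^ Fintype.card ι)⁻¹
  have hw : ∑ _ε : ι → Bool, w = 1 := by
    simp [w]
  have hp : Measurable p := p.continuous_of_finiteDimensional.measurable
  have hmeas (ε : ι → Bool) : Measurable fun x => ENNReal.ofReal (Real.exp (-p (signVec ε * x))) :=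
    by fun_prop
  have jensen (x : ι → ℝ) :
      Real.exp (-p.signAverage x) ≤ ∑ ε : ι → Bool, w * Real.exp (-p (signVec ε * x)) := by
    simpa [signAverage_apply, mul_sum] using convexOn_exp.map_sum_le (t := univ) (w := fun _ => w)
      (p := fun ε => -p (signVec ε * x)) (fun _ _ => by positivity) hw (fun _ _ => Set.mem_univ _)
  calc ∫⁻ x, ENNReal.ofReal (Real.exp (-p.signAverage x))
      ≤ ∫⁻ x, ∑ ε : ι → Bool,
          ENNReal.ofReal w * ENNReal.ofReal (Real.exp (-p (signVec ε * x))) := by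
        refine lintegral_mono fun x => (ENNReal.ofReal_le_ofReal (jensen x)).trans_eq ?_
        rw [ENNReal.ofReal_sum_of_nonneg fun _ _ => by positivity]
        simp_rw [ENNReal.ofReal_mul (by positivity : 0 ≤ w)]
    _ = ∑ ε : ι → Bool, ENNReal.ofReal w * ∫⁻ x, ENNReal.ofReal (Real.exp (-p x)) := by
        rw [lintegral_finsetSum _ fun ε _ => (hmeas ε).const_mul _]
        refine sum_congr rfl fun ε _ => ?_
        rw [lintegral_const_mul _ (hmeas ε)]
        congr 1
        exact (measurePreserving_signVec_mul ε).lintegral_comp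
          (f := fun x => ENNReal.ofReal (Real.exp (-p x))) (by fun_prop)
    _ = ∫⁻ x, ENNReal.ofReal (Real.exp (-p x)) := by
        rw [← sum_mul, ← ENNReal.ofReal_sum_of_nonneg (fun _ _ => by positivity), hw,
          ENNReal.ofReal_one, one_mul]

lemma ofReal_two_pow_mul_inv_signAverage_pow_le_volume (hp : ∀ i, p (Pi.single i 1) = 1) :
    ENNReal.ofReal (2 ^ Fintype.card ι * (p.signAverage 1)⁻¹ ^ Fintype.card ι) ≤
      volume {x | p x < 1} := by
  rcases isEmpty_or_nonempty ι with hι | hι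
  · have : {x : ι → ℝ | p x < 1} = Set.univ :=
      Set.eq_univ_of_forall fun x => by simp [Subsingleton.elim x 0]
    simp [this, volume_pi]
  set M := p.signAverage 1
  have hM : 0 < M := one_pos.trans_le (p.one_le_signAverage_one hp)
  calc ENNReal.ofReal (2 ^ Fintype.card ι * M⁻¹ ^ Fintype.card ι)
      = volume (Metric.ball 0 M⁻¹) := by rw [Real.volume_pi_ball 0 (inv_pos.2 hM), mul_pow]
    _ ≤ volume {x | p.signAverage x < 1} := measure_mono fun x hx => by
        have : ‖x‖ < M⁻¹ := by simpa using hx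
        calc p.signAverage x ≤ M * ‖x‖ := p.signAverage_le_mul_norm x
          _ < M * M⁻¹ := by gcongr
          _ = 1 := mul_inv_cancel₀ hM.ne'
    _ ≤ volume {x | p x < 1} := measure_lt_one_le_of_lintegral_exp_neg_le volume _ _
        p.lintegral_exp_neg_signAverage_le

end Seminorm

end SignAverage

theorem stmt5_general (n : ℕ) (N : (Fin n → ℝ) → ℝ)
    (h_tri : ∀ x y, N (x + y) ≤ N x + N y)
    (h_smul : ∀ (c : ℝ) x, N (c • x) = |c| * N x)
    (h_unit : ∀ i, N (Pi.single i 1) = 1) :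
    ENNReal.ofReal ((2 : ℝ) ^ n *
        (((2 : ℝ) ^ n)⁻¹ * ∑ ε : Fin n → Bool,
          N (∑ i, (if ε i then (1 : ℝ) else -1) • (Pi.single i 1 : Fin n → ℝ)))⁻¹ ^ n) ≤
      volume {x : Fin n → ℝ | N x ≤ 1} := by
  let p : Seminorm ℝ (Fin n → ℝ) := .of N h_tri (by simpa only [Real.norm_eq_abs] using h_smul)
  have hsum (ε : Fin n → Bool) :
      ∑ i, (if ε i then (1 : ℝ) else -1) • (Pi.single i 1 : Fin n → ℝ) = signVec ε := by
    simp_rw [← Pi.single_smul, smul_eq_mul, mul_one, univ_sum_single]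
    rfl
  simp only [hsum]
  calc _ = ENNReal.ofReal
        (2 ^ Fintype.card (Fin n) * (p.signAverage 1)⁻¹ ^ Fintype.card (Fin n)) := by
        simp only [Seminorm.signAverage_apply, Fintype.card_fin, mul_one]
        rfl
    _ ≤ volume {x | p x < 1} := p.ofReal_two_pow_mul_inv_signAverage_pow_le_volume h_unit
    _ ≤ volume {x | N x ≤ 1} := measure_mono fun x (hx : N x < 1) => hx.le

theorem stmt5 (n : ℕ) (N : (Fin n → ℝ) → ℝ)
    (h_tri : ∀ x y, N (x + y) ≤ N x + N y)
    (h_smul : ∀ (c : ℝ) x, N (c • x) = |c| * N x)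
    (h_pos : ∀ x, x ≠ 0 → 0 < N x)
    (h_unit : ∀ i, N (Pi.single i 1) = 1) :
    ENNReal.ofReal ((2 : ℝ) ^ n *
        (((2 : ℝ) ^ n)⁻¹ * ∑ ε : Fin n → Bool,
          N (∑ i, (if ε i then (1 : ℝ) else -1) • (Pi.single i 1 : Fin n → ℝ)))⁻¹ ^ n) ≤
      volume {x : Fin n → ℝ | N x ≤ 1} :=
  stmt5_general n N h_tri h_smul h_unit
end
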